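/- arXiv:1903.02095 — 7 statements merged into one kernel-verified Lean document; each statement's English description precedes it below -/
import Mathlib

section
/- Neumann's Lemma: An infinite group cannot be covered by finitely many left cosets of subgroups of infinite index. That is, if G is an infinite group, G₁, ..., Gₙ are subgroups of G each of infinite index, and g₁, ..., gₙ ∈ G, then G ≠ ⋃ᵢ gᵢGᵢ. -/
open scoped Pointwise

theorem neumann_lemma_general {G : Type*} [Group G]
    (n : ℕ) (H : Fin n → Subgroup G) (g : Fin n → G)
    (hindex : ∀ i, (H i).index = 0) :
    (⋃ i, g i • (H i : Set G)) ≠ Set.univ := by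
  intro hcov
  obtain ⟨k, -, hk⟩ :=
    Subgroup.exists_finiteIndex_of_leftCoset_cover (s := Finset.univ) (by simpa using hcov)
  exact hk.index_ne_zero (hindex k)

/-- **Neumann's Lemma**: an infinite group cannot be covered by finitely many left
cosets of subgroups of infinite index. -/
theorem neumann_lemma {G : Type*} [Group G] [Infinite G]
    (n : ℕ) (H : Fin n → Subgroup G) (g : Fin n → G)
    (hindex : ∀ i, (H i).index = 0) :
    (⋃ i, g i • (H i : Set G)) ≠ Set.univ :=
  neumann_lemma_general n H g hindex
end

section
/- If a group G has a nontrivial finite conjugacy class, then G admits no ladder: for any scale Λ = (λ, Σ, A) satisfying the exhaustion condition (every group element lies in some Δₙ^{λ(n)}), there exists an element of G with two distinct spike decompositions. -/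
/-!
A finite conjugacy class `C` lies in a single ball `Δₙ^{λ(n)}`, the balls being increasing in `n`.
For `σ ∈ Σₙ` the identity `g₀·σ = 1·σ·(σ⁻¹g₀σ)` then exhibits two spike decompositions of
`g₀·σ` of height `n`, which differ in their left factor because `g₀ ≠ 1`.
-/

open scoped Pointwise

variable {G : Type*} [Group G]

/-- The set of products of at most `k` elements of `D` (including the empty product). -/
def ball (D : Set G) (k : ℕ) : Set G :=
  {g | ∃ l : List G, (∀ x ∈ l, x ∈ D) ∧ l.length ≤ k ∧ l.prod = g}

/-- `Δₙ`: the union of the spiking sets `Σᵢ` (for `1 ≤ i < n`), the filling sets `Aᵢ`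
(for `i < n`), and their inverses. -/
def Delta (S A : ℕ → Set G) (n : ℕ) : Set G :=
  (⋃ i ∈ Set.Ico 1 n, (S i ∪ (S i)⁻¹)) ∪ (⋃ i ∈ Set.Iio n, (A i ∪ (A i)⁻¹))

/-- A spike decomposition of `g` of height `n`: `g = a·σ·b` with `σ ∈ Σₙ` and
`a, b ∈ Δₙ^{λ(n)}`. -/
def IsSpikeDecomp (lam : ℕ → ℕ) (S A : ℕ → Set G) (g : G) (n : ℕ) (a σ b : G) : Prop :=
  1 ≤ n ∧ σ ∈ S n ∧ a ∈ ball (Delta S A n) (lam n) ∧ b ∈ ball (Delta S A n) (lam n) ∧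
    g = a * σ * b

lemma one_mem_ball (D : Set G) (k : ℕ) : (1 : G) ∈ ball D k :=
  ⟨[], by simp, by simp, by simp⟩

lemma ball_mono {D D' : Set G} {k k' : ℕ} (hD : D ⊆ D') (hk : k ≤ k') :
    ball D k ⊆ ball D' k' := by
  rintro g ⟨l, hl, hlen, rfl⟩
  exact ⟨l, fun x hx => hD (hl x hx), hlen.trans hk, rfl⟩

lemma Delta_mono (S A : ℕ → Set G) {m n : ℕ} (h : m ≤ n) : Delta S A m ⊆ Delta S A n :=
  Set.union_subset_union (Set.biUnion_subset_biUnion_left (Set.Ico_subset_Ico_right h))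
    (Set.biUnion_subset_biUnion_left fun _ hi => lt_of_lt_of_le hi h)

lemma monotone_ball_Delta {lam : ℕ → ℕ} (S A : ℕ → Set G) (hlam : Monotone lam) :
    Monotone fun n => ball (Delta S A n) (lam n) :=
  fun _ _ h => ball_mono (Delta_mono S A h) (hlam h)

lemma exists_subset_ball_Delta_of_finite {lam : ℕ → ℕ} {S A : ℕ → Set G} (hlam : Monotone lam)
    (hexh : ∀ g : G, ∃ n, 1 ≤ n ∧ g ∈ ball (Delta S A n) (lam n)) {s : Set G} (hs : s.Finite) :
    ∃ n, 1 ≤ n ∧ s ⊆ ball (Delta S A n) (lam n) := by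
  have hcover : (hs.toFinset : Set G) ⊆ ⋃ n : ℕ, ball (Delta S A (n + 1)) (lam (n + 1)) := by
    intro g _
    obtain ⟨n, hn, hg⟩ := hexh g
    exact Set.mem_iUnion.2 ⟨n - 1, by rwa [Nat.sub_add_cancel hn]⟩
  have hdir : Directed (· ⊆ ·) fun n : ℕ => ball (Delta S A (n + 1)) (lam (n + 1)) :=
    ((monotone_ball_Delta S A hlam).comp fun _ _ => Nat.succ_le_succ).directed_le
  obtain ⟨n, hn⟩ := hdir.exists_mem_subset_of_finset_subset_biUnion hcover
  exact ⟨n + 1, n.succ_pos, by simpa using hn⟩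

lemma two_spike_decomps_mul_of_conj_mem_ball {lam : ℕ → ℕ} {S A : ℕ → Set G} {n : ℕ}
    (hn : 1 ≤ n) {σ g : G} (hσ : σ ∈ S n) (hg : g ≠ 1)
    (hg_mem : g ∈ ball (Delta S A n) (lam n))
    (hconj_mem : σ⁻¹ * g * σ ∈ ball (Delta S A n) (lam n)) :
    IsSpikeDecomp lam S A (g * σ) n g σ 1 ∧ IsSpikeDecomp lam S A (g * σ) n 1 σ (σ⁻¹ * g * σ) ∧
      (n, g, σ, (1 : G)) ≠ (n, 1, σ, σ⁻¹ * g * σ) :=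
  ⟨⟨hn, hσ, hg_mem, one_mem_ball _ _, by group⟩,
    ⟨hn, hσ, one_mem_ball _ _, hconj_mem, by group⟩,
    fun h => hg (congrArg (·.2.1) h)⟩

theorem exists_two_spike_decomps_of_finite_conj_class_general
    (lam : ℕ → ℕ) (S A : ℕ → Set G)
    (hlam : Monotone lam)
    (hSne : ∀ n, 1 ≤ n → (S n).Nonempty)
    (hexh : ∀ g : G, ∃ n, 1 ≤ n ∧ g ∈ ball (Delta S A n) (lam n))
    (g₀ : G) (hg₀ : g₀ ≠ 1) (hfin : {x : G | ∃ h : G, h⁻¹ * g₀ * h = x}.Finite) :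
    ∃ (g : G) (n : ℕ) (a σ b : G) (n' : ℕ) (a' σ' b' : G),
      IsSpikeDecomp lam S A g n a σ b ∧ IsSpikeDecomp lam S A g n' a' σ' b' ∧
      (n, a, σ, b) ≠ (n', a', σ', b') := by
  obtain ⟨n, hn, hC⟩ := exists_subset_ball_Delta_of_finite hlam hexh hfin
  obtain ⟨σ, hσ⟩ := hSne n hn
  exact ⟨_, _, _, _, _, _, _, _, _, two_spike_decomps_mul_of_conj_mem_ball hn hσ hg₀
    (hC ⟨1, by group⟩) (hC ⟨σ, rfl⟩)⟩

/-- If `G` has a nontrivial finite conjugacy class, then no scale on `G` with the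
exhaustion property has unique spike decompositions: some element admits two distinct
spike decompositions. -/
theorem exists_two_spike_decomps_of_finite_conj_class
    (lam : ℕ → ℕ) (S A : ℕ → Set G)
    (hlam : Monotone lam) (hlamunb : ∀ N, ∃ n, N ≤ lam n)
    (hSne : ∀ n, 1 ≤ n → (S n).Nonempty)
    (hSdisj : ∀ m n, 1 ≤ m → 1 ≤ n → m ≠ n → Disjoint (S m) (S n))
    (hexh : ∀ g : G, ∃ n, 1 ≤ n ∧ g ∈ ball (Delta S A n) (lam n))
    (g₀ : G) (hg₀ : g₀ ≠ 1) (hfin : {x : G | ∃ h : G, h⁻¹ * g₀ * h = x}.Finite) :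
    ∃ (g : G) (n : ℕ) (a σ b : G) (n' : ℕ) (a' σ' b' : G),
      IsSpikeDecomp lam S A g n a σ b ∧ IsSpikeDecomp lam S A g n' a' σ' b' ∧
      (n, a, σ, b) ≠ (n', a', σ', b') :=
  exists_two_spike_decomps_of_finite_conj_class_general lam S A hlam hSne hexh g₀ hg₀ hfin
end

section
/- The despiking graph of a ladder is a forest: in the graph on vertex set G whose edges are the pairs (g, a) where g has (unique) spike decomposition g = a·σ·b, there are no cycles. -/
open scoped Pointwise

variable {G : Type*} [Group G]

/-!
Give each element its height, the least `n` of a spike decomposition (`0` if there is none).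
Every edge then joins an element to its prefix, which is strictly lower, and an element has only
one prefix. On a cycle, a vertex of maximal height would have both of its cycle-neighbours below
it, so both would be its prefix; but the two neighbours of a vertex on a cycle are distinct.
-/

namespace SimpleGraph

variable {V α : Type*} [LinearOrder α] {G : SimpleGraph V}

lemma Walk.IsCycle.exists_rotate_max {v : V} {c : G.Walk v v} (hc : c.IsCycle) (f : V → α) :
    ∃ (u : V) (c' : G.Walk u u), c'.IsCycle ∧ ∀ w ∈ c'.support, f w ≤ f u := by
  classical
  obtain ⟨u, hu, hmax⟩ := Set.exists_max_image {w | w ∈ c.support} f c.support.finite_toSet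
    ⟨v, c.start_mem_support⟩
  exact ⟨u, c.rotate u hu, hc.rotate hu, fun w hw ↦ hmax w ((c.mem_support_rotate_iff u hu).mp hw)⟩

theorem isAcyclic_of_subsingleton_lower_neighbors (f : V → α)
    (hne : ∀ ⦃x y⦄, G.Adj x y → f x ≠ f y)
    (hlower : ∀ ⦃x y z⦄, G.Adj x y → G.Adj x z → f y < f x → f z < f x → y = z) :
    G.IsAcyclic := by
  intro v c hc
  obtain ⟨u, c, hc, hmax⟩ := hc.exists_rotate_max f
  have hsnd := c.adj_snd hc.not_nil
  have hpen := (c.adj_penultimate hc.not_nil).symm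
  exact hc.snd_ne_penultimate <| hlower hsnd hpen
    (lt_of_le_of_ne (hmax _ (c.getVert_mem_support 1)) (hne hsnd).symm)
    (lt_of_le_of_ne (hmax _ (c.getVert_mem_support _)) (hne hpen).symm)

theorem isAcyclic_fromRel_of_lt_of_unique {r : V → V → Prop} (f : V → α)
    (hf : ∀ ⦃x y⦄, r x y → f y < f x) (hr : ∀ ⦃x y z⦄, r x y → r x z → y = z) :
    (fromRel r).IsAcyclic := by
  have hdown : ∀ ⦃x y⦄, (fromRel r).Adj x y → f y < f x → r x y := fun x y hxy hlt ↦
    (((fromRel_adj r x y).mp hxy).2.resolve_right fun hyx ↦ (hf hyx).asymm hlt)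
  refine isAcyclic_of_subsingleton_lower_neighbors f (fun x y hxy ↦ ?_)
    fun x y z hxy hxz hy hz ↦ hr (hdown hxy hy) (hdown hxz hz)
  rcases ((fromRel_adj r x y).mp hxy).2 with h | h
  exacts [(hf h).ne', (hf h).ne]

end SimpleGraph

noncomputable def spikeHeight (lam : ℕ → ℕ) (S A : ℕ → Set G) (g : G) : ℕ :=
  sInf {n | ∃ a σ b, IsSpikeDecomp lam S A g n a σ b}

lemma spikeHeight_le {lam : ℕ → ℕ} {S A : ℕ → Set G} {g a σ b : G} {n : ℕ}
    (hd : IsSpikeDecomp lam S A g n a σ b) : spikeHeight lam S A g ≤ n :=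
  Nat.sInf_le ⟨a, σ, b, hd⟩

lemma spikeHeight_eq {lam : ℕ → ℕ} {S A : ℕ → Set G} {g a σ b : G} {n : ℕ}
    (hd : IsSpikeDecomp lam S A g n a σ b)
    (huniq : ∀ m a' σ' b', IsSpikeDecomp lam S A g m a' σ' b' → m = n) :
    spikeHeight lam S A g = n :=
  (spikeHeight_le hd).antisymm <|
    le_csInf ⟨n, a, σ, b, hd⟩ fun _ ⟨_, _, _, hd'⟩ ↦ (huniq _ _ _ _ hd').ge

lemma spikeHeight_lt {lam : ℕ → ℕ} {S A : ℕ → Set G} {g : G} {n : ℕ} (hn : 1 ≤ n)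
    (hlt : ∀ m a σ b, IsSpikeDecomp lam S A g m a σ b → m < n) :
    spikeHeight lam S A g < n := by
  by_cases hg : ∃ m a σ b, IsSpikeDecomp lam S A g m a σ b
  · obtain ⟨m, a, σ, b, hd⟩ := hg
    exact (spikeHeight_le hd).trans_lt (hlt m a σ b hd)
  · rw [spikeHeight, Set.eq_empty_of_forall_notMem (s := {m | _}) fun m hm ↦ hg ⟨m, hm⟩,
      Nat.sInf_empty]
    exact hn

/-- The despiking graph of a ladder is a forest (it has no cycles). -/
theorem despiking_graph_isAcyclic
    (lam : ℕ → ℕ) (S A : ℕ → Set G)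
    (huniq : ∀ (g : G) (n : ℕ) (a σ b : G) (n' : ℕ) (a' σ' b' : G),
      IsSpikeDecomp lam S A g n a σ b → IsSpikeDecomp lam S A g n' a' σ' b' →
      n = n' ∧ a = a' ∧ σ = σ' ∧ b = b')
    (hdec : ∀ (g : G) (n : ℕ) (a σ b : G), IsSpikeDecomp lam S A g n a σ b →
      ∀ (m : ℕ) (a' σ' b' : G), IsSpikeDecomp lam S A a m a' σ' b' → m < n) :
    (SimpleGraph.fromRel fun g h : G =>
      ∃ (n : ℕ) (σ b : G), IsSpikeDecomp lam S A g n h σ b).IsAcyclic := by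
  refine SimpleGraph.isAcyclic_fromRel_of_lt_of_unique (spikeHeight lam S A) ?_ ?_
  · rintro g a ⟨n, σ, b, hd⟩
    rw [spikeHeight_eq hd fun m a' σ' b' hd' ↦ (huniq _ _ _ _ _ _ _ _ _ hd' hd).1]
    exact spikeHeight_lt hd.1 (hdec g n a σ b hd)
  · rintro g a a' ⟨n, σ, b, hd⟩ ⟨n', σ', b', hd'⟩
    exact (huniq _ _ _ _ _ _ _ _ _ hd hd').2.1
end

section
/- In the despiking forest of a ladder, every connected component contains exactly one unspiked element (an element admitting no spike decomposition). -/
/-!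
Iterating `g ↦ prefix g` strictly lowers the height, so it ends at an unspiked element `u` of the
component of `g`. Since each element has at most one prefix, the set of elements whose prefix chain
ends at `u` is closed under forest edges in both directions, hence contains the whole component;
an unspiked element in it has a trivial chain, so it is `u`.
-/

open scoped Pointwise

variable {G : Type*} [Group G]

open Relation

namespace SimpleGraph

variable {α : Type*} {r : α → α → Prop}

theorem Reachable.of_reflTransGen_fromRel {x y : α} (h : ReflTransGen r x y) :
    (fromRel r).Reachable x y := by
  induction h with
  | refl => rfl
  | @tail y z _ hyz ih =>
    obtain rfl | hne := eq_or_ne y z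
    · exact ih
    · exact ih.trans (Adj.reachable ⟨hne, .inl hyz⟩)

theorem Reachable.reflTransGen_of_functional (hfun : ∀ ⦃x y z⦄, r x y → r x z → y = z)
    {u : α} (hu : ¬ ∃ v, r u v) {x y : α} (hxy : (fromRel r).Reachable x y)
    (hx : ReflTransGen r x u) : ReflTransGen r y u := by
  rw [reachable_iff_reflTransGen] at hxy
  induction hxy with
  | refl => exact hx
  | @tail y z _ hyz ih =>
    obtain ⟨-, hyz | hzy⟩ := hyz
    · rcases ih.cases_head with rfl | ⟨w, hyw, hwu⟩
      · exact absurd ⟨z, hyz⟩ hu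
      · rwa [hfun hyz hyw]
    · exact ih.head hzy

theorem existsUnique_reachable_fromRel_not_exists (hfun : ∀ ⦃x y z⦄, r x y → r x z → y = z)
    (hwf : WellFounded (flip r)) (x : α) :
    ∃! u, (fromRel r).Reachable x u ∧ ¬ ∃ v, r u v := by
  obtain ⟨u, hxu, hmin⟩ := hwf.has_min {y | ReflTransGen r x y} ⟨x, .refl⟩
  have hu : ¬ ∃ v, r u v := fun ⟨v, huv⟩ => hmin v (hxu.tail huv) huv
  refine ⟨u, ⟨.of_reflTransGen_fromRel hxu, hu⟩, fun v ⟨hxv, hv⟩ => ?_⟩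
  rcases (hxv.reflTransGen_of_functional hfun hu hxu).cases_head with rfl | ⟨w, hvw, -⟩
  · rfl
  · exact absurd ⟨w, hvw⟩ hv

end SimpleGraph

def IsSpikePrefix (lam : ℕ → ℕ) (S A : ℕ → Set G) (g a : G) : Prop :=
  ∃ (n : ℕ) (σ b : G), IsSpikeDecomp lam S A g n a σ b

section Ladder

variable {lam : ℕ → ℕ} {S A : ℕ → Set G}

theorem IsSpikePrefix.functional
    (huniq : ∀ (g : G) (n : ℕ) (a σ b : G) (n' : ℕ) (a' σ' b' : G),
      IsSpikeDecomp lam S A g n a σ b → IsSpikeDecomp lam S A g n' a' σ' b' →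
      n = n' ∧ a = a' ∧ σ = σ' ∧ b = b')
    ⦃g a a' : G⦄ (h : IsSpikePrefix lam S A g a) (h' : IsSpikePrefix lam S A g a') : a = a' :=
  let ⟨_, _, _, hd⟩ := h
  let ⟨_, _, _, hd'⟩ := h'
  (huniq _ _ _ _ _ _ _ _ _ hd hd').2.1

theorem wellFounded_flip_isSpikePrefix
    (hdec : ∀ (g : G) (n : ℕ) (a σ b : G), IsSpikeDecomp lam S A g n a σ b →
      ∀ (m : ℕ) (a' σ' b' : G), IsSpikeDecomp lam S A a m a' σ' b' → m < n) :
    WellFounded (flip (IsSpikePrefix lam S A)) := by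
  have acc_of_height_lt : ∀ (n : ℕ) (g : G),
      (∀ (m : ℕ) (a σ b : G), IsSpikeDecomp lam S A g m a σ b → m < n) →
      Acc (flip (IsSpikePrefix lam S A)) g := by
    intro n
    induction n using Nat.strong_induction_on with
    | _ n ih =>
      intro g hg
      exact ⟨_, fun a ⟨m, σ, b, hd⟩ => ih m (hg _ _ _ _ hd) a (hdec _ _ _ _ _ hd)⟩
  exact ⟨fun g => ⟨_, fun a ⟨n, σ, b, hd⟩ => acc_of_height_lt n a (hdec _ _ _ _ _ hd)⟩⟩

end Ladder

/-- Every connected component of the despiking forest of a ladder contains exactly one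
unspiked element. -/
theorem component_unique_unspiked
    (lam : ℕ → ℕ) (S A : ℕ → Set G)
    (huniq : ∀ (g : G) (n : ℕ) (a σ b : G) (n' : ℕ) (a' σ' b' : G),
      IsSpikeDecomp lam S A g n a σ b → IsSpikeDecomp lam S A g n' a' σ' b' →
      n = n' ∧ a = a' ∧ σ = σ' ∧ b = b')
    (hdec : ∀ (g : G) (n : ℕ) (a σ b : G), IsSpikeDecomp lam S A g n a σ b →
      ∀ (m : ℕ) (a' σ' b' : G), IsSpikeDecomp lam S A a m a' σ' b' → m < n)
    (g : G) :
    ∃! u : G,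
      (SimpleGraph.fromRel fun x y : G =>
        ∃ (n : ℕ) (σ b : G), IsSpikeDecomp lam S A x n y σ b).Reachable g u ∧
      ¬ ∃ (n : ℕ) (a σ b : G), IsSpikeDecomp lam S A u n a σ b := by
  have h := SimpleGraph.existsUnique_reachable_fromRel_not_exists
    (IsSpikePrefix.functional huniq) (wellFounded_flip_isSpikePrefix hdec) g
  simp only [IsSpikePrefix, exists_comm (α := G) (β := ℕ)] at h
  exact h
end

section
/- Let X₁, X₂, ... be i.i.d. ℤ₊-valued random variables with distribution p, and suppose the gauge function λ satisfies the rapid-growth condition λ(n+1) ≥ n + 2(λ(1) + λ(2) + ... + λ(n)) for all n ≥ 1. Then a sequence g_k = g₀σ₁h₁...σ_kh_k with heights n_k = height(σ_k) strictly increasing and with |g₀|_{n₁} ≤ λ(n₁) and |h_j|_{n_j} ≤ λ(n_j) for all j ≤ k automatically satisfies |g_{k−1}|_{n_k} ≤ λ(n_k) for all k ≥ 2. -/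
/-! The growth condition gives `2 λ(m) + 1 ≤ λ(m + 1)`. By induction on `k ≥ 1`,
`|g_{k-1}|_{n_k} ≤ λ(n_k)` (for `k = 1` this is the hypothesis on `g₀`): writing
`g_k = g_{k-1} σ_k h_k` and passing to the coarser level `n_{k+1} > n_k`, subadditivity bounds
`|g_k|_{n_{k+1}}` by `λ(n_k) + 1 + λ(n_k) ≤ λ(n_k + 1) ≤ λ(n_{k+1})`. -/

theorem two_mul_add_one_le_of_add_two_mul_sum_le {lam : ℕ → ℕ} {m : ℕ} (hm : 1 ≤ m)
    (hgrow : m + 2 * ∑ i ∈ Finset.Icc 1 m, lam i ≤ lam (m + 1)) :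
    2 * lam m + 1 ≤ lam (m + 1) := by
  have : lam m ≤ ∑ i ∈ Finset.Icc 1 m, lam i :=
    Finset.single_le_sum (fun i _ => Nat.zero_le (lam i)) (Finset.mem_Icc.2 ⟨hm, le_rfl⟩)
  omega

theorem apply_mul_mul_le {G : Type*} [Mul G] {la lb : G → ℕ}
    (hsub : ∀ g h, lb (g * h) ≤ lb g + lb h) (hle : ∀ g, lb g ≤ la g)
    {A B : ℕ} (hAB : 2 * A + 1 ≤ B) {x s y : G}
    (hx : la x ≤ A) (hs : lb s ≤ 1) (hy : la y ≤ A) :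
    lb (x * s * y) ≤ B :=
  calc lb (x * s * y) ≤ lb x + lb s + lb y :=
        (hsub _ _).trans (Nat.add_le_add_right (hsub _ _) _)
    _ ≤ A + 1 + A := add_le_add_three ((hle x).trans hx) hs ((hle y).trans hy)
    _ ≤ B := by omega

/-- If the gauge function grows rapidly (`λ(n+1) ≥ n + 2(λ(1) + ⋯ + λ(n))`), then along
a sequence `g_k = g₀σ₁h₁⋯σ_kh_k` with strictly increasing heights `n_k`, the bounds
`|g₀|_{n₁} ≤ λ(n₁)` and `|h_j|_{n_j} ≤ λ(n_j)` automatically imply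
`|g_{k-1}|_{n_k} ≤ λ(n_k)` for all `k ≥ 2`. -/
theorem length_bound_automatic {G : Type*} [Group G]
    (L : ℕ → G → ℕ)
    (hsub : ∀ (n : ℕ) (g h : G), L n (g * h) ≤ L n g + L n h)
    (hmono : ∀ m n : ℕ, m ≤ n → ∀ g : G, L n g ≤ L m g)
    (lam : ℕ → ℕ) (hlam : Monotone lam)
    (hgrow : ∀ m, 1 ≤ m → m + 2 * (∑ i ∈ Finset.Icc 1 m, lam i) ≤ lam (m + 1))
    (σ h : ℕ → G) (n : ℕ → ℕ) (g : ℕ → G)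
    (hn : ∀ k, 1 ≤ k → n k < n (k + 1)) (hn1 : 1 ≤ n 1)
    (hσ : ∀ k, 1 ≤ k → ∀ m, n k < m → L m (σ k) ≤ 1)
    (hrec : ∀ k, 1 ≤ k → g k = g (k - 1) * σ k * h k)
    (hg0 : L (n 1) (g 0) ≤ lam (n 1))
    (hh : ∀ k, 1 ≤ k → L (n k) (h k) ≤ lam (n k)) :
    ∀ k, 2 ≤ k → L (n k) (g (k - 1)) ≤ lam (n k) := by
  have hn_mono : MonotoneOn n (Set.Ici 1) :=
    monotoneOn_nat_Ici_of_le_succ fun k hk => (hn k hk).le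
  suffices H : ∀ k, 1 ≤ k → L (n k) (g (k - 1)) ≤ lam (n k) from fun k hk => H k (by omega)
  intro k hk
  induction k, hk using Nat.le_induction with
  | base => exact hg0
  | succ k hk ih =>
    have hnk : 1 ≤ n k := hn1.trans (hn_mono (Set.mem_Ici.2 le_rfl) hk hk)
    have hgap : 2 * lam (n k) + 1 ≤ lam (n (k + 1)) :=
      (two_mul_add_one_le_of_add_two_mul_sum_le hnk (hgrow _ hnk)).trans (hlam (hn k hk))
    rw [Nat.add_sub_cancel, hrec k hk]
    exact apply_mul_mul_le (hsub _) (hmono _ _ (hn k hk).le) hgap ih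
      (hσ k hk _ (hn k hk)) (hh k hk)
end

section
/- Let p = (p₀, p₁, ...) be a probability measure on ℤ₊ with infinite support, set ρⱼ = pⱼ/(pⱼ + p_{j+1} + ...), and let X₁, X₂, ... be i.i.d. with law p. If Σⱼ ρⱼ² < ∞, then almost surely the records of the sequence are eventually simple: there exists N such that for all n ≥ N the maximum Mₙ = max{X₁, ..., Xₙ} is attained at exactly one index i ≤ n. -/
/-!
Call `j` a tied record of a sequence when the running maximum reaches the value `j` at two
times `m < n` with every other term before time `n` strictly below `j`. For an i.i.d. sequence
with law `p`, summing over the pairs `m < n` bounds its probability by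
`Σ_{m<n} pⱼ² P(X < j)^(n-1) = (pⱼ / P(X ≥ j))² = ρⱼ²`, so by Borel–Cantelli almost surely only
finitely many values are tied records. Since `p` has infinite support the running maximum is
almost surely unbounded; once it exceeds the last tied record, a maximum attained at two indices
would be a tied record, so it is attained exactly once.
-/

open MeasureTheory ProbabilityTheory Filter
open scoped ENNReal

def IsTiedRecord {α : Type*} [LinearOrder α] (x : ℕ → α) (j : α) : Prop :=
  ∃ m n, m < n ∧ x m = j ∧ x n = j ∧ ∀ i < n, i ≠ m → x i < j

section Deterministic

variable {α : Type*} [LinearOrder α] [OrderBot α] {x : ℕ → α}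

/-- The tie is found at the first two times the maximum value is attained. -/
theorem isTiedRecord_sup_of_ne {n i i' : ℕ} (hi : i < n) (hi' : i' < n) (hne : i ≠ i')
    (hxi : x i = (Finset.range n).sup x) (hxi' : x i' = (Finset.range n).sup x) :
    IsTiedRecord x ((Finset.range n).sup x) := by
  classical
  set v := (Finset.range n).sup x
  have hfirst : ∃ l, x l = v := ⟨i, hxi⟩
  set m := Nat.find hfirst
  have hm_le : m ≤ min i i' := le_min (Nat.find_min' _ hxi) (Nat.find_min' _ hxi')
  obtain ⟨w, hmw, hxw, hwn⟩ : ∃ w, m < w ∧ x w = v ∧ w < n := by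
    rcases hne.lt_or_gt with h | h
    · exact ⟨i', by omega, hxi', hi'⟩
    · exact ⟨i, by omega, hxi, hi⟩
  have hsecond : ∃ l, m < l ∧ x l = v := ⟨w, hmw, hxw⟩
  obtain ⟨hmk, hxk⟩ := Nat.find_spec hsecond
  have hkw : Nat.find hsecond ≤ w := Nat.find_min' _ ⟨hmw, hxw⟩
  refine ⟨m, Nat.find hsecond, hmk, Nat.find_spec hfirst, hxk, fun l hl hlm => ?_⟩
  have hle : x l ≤ v := Finset.le_sup (Finset.mem_range.2 (by omega))
  refine hle.lt_of_ne fun hxl => ?_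
  rcases hlm.lt_or_gt with h | h
  · exact Nat.find_min hfirst h hxl
  · exact Nat.find_min hsecond hl ⟨h, hxl⟩

theorem exists_forall_ge_existsUnique_eq_sup {J : α} (hJ : ∀ j ≥ J, ¬ IsTiedRecord x j)
    (hx : ∃ i, J < x i) :
    ∃ N, ∀ n ≥ N, ∃! i, i ∈ Finset.range n ∧ x i = (Finset.range n).sup x := by
  obtain ⟨i₀, hi₀⟩ := hx
  refine ⟨i₀ + 1, fun n hn => ?_⟩
  have hi₀n : i₀ ∈ Finset.range n := Finset.mem_range.2 (by omega)
  obtain ⟨i, hi, hxi⟩ := Finset.exists_mem_eq_sup _ ⟨i₀, hi₀n⟩ x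
  refine ⟨i, ⟨hi, hxi.symm⟩, fun i' ⟨hi', hxi'⟩ => by_contra fun hne => ?_⟩
  exact hJ _ (hi₀.le.trans (Finset.le_sup hi₀n))
    (isTiedRecord_sup_of_ne (Finset.mem_range.1 hi') (Finset.mem_range.1 hi) hne hxi' hxi.symm)

end Deterministic

section Independent

variable {Ω ι α : Type*} [MeasurableSpace Ω] [MeasurableSpace α] {μ : Measure Ω}
  {p : Measure α}

theorem ProbabilityTheory.iIndepFun.measure_biInter_preimage_eq_prod {X : ι → Ω → α}
    (hmeas : ∀ i, Measurable (X i)) (hindep : iIndepFun X μ) (hdist : ∀ i, μ.map (X i) = p)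
    (S : Finset ι) {A : ι → Set α} (hA : ∀ i, MeasurableSet (A i)) :
    μ (⋂ i ∈ S, X i ⁻¹' A i) = ∏ i ∈ S, p (A i) := by
  rw [hindep.meas_biInter fun i _ => ⟨A i, hA i, rfl⟩]
  exact Finset.prod_congr rfl fun i _ => by rw [← hdist i, Measure.map_apply (hmeas i) (hA i)]

theorem measure_forall_mem_eq_zero {X : ℕ → Ω → α} (hmeas : ∀ i, Measurable (X i))
    (hindep : iIndepFun X μ) (hdist : ∀ i, μ.map (X i) = p) {A : Set α} (hA : MeasurableSet A)
    (hpA : p A < 1) : μ {ω | ∀ i, X i ω ∈ A} = 0 := by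
  refine le_antisymm (ge_of_tendsto' (ENNReal.tendsto_pow_atTop_nhds_zero_of_lt_one hpA)
    fun n => ?_) bot_le
  calc μ {ω | ∀ i, X i ω ∈ A} ≤ μ (⋂ i ∈ Finset.range n, X i ⁻¹' A) :=
        measure_mono fun ω hω => Set.mem_biInter fun i _ => hω i
    _ = p A ^ n := by
        rw [hindep.measure_biInter_preimage_eq_prod hmeas hdist _ fun _ => hA,
          Finset.prod_const, Finset.card_range]

end Independent

section NatValued

variable {Ω : Type*} [MeasurableSpace Ω] {μ : Measure Ω} {p : Measure ℕ}
  {X : ℕ → Ω → ℕ}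

theorem ae_forall_exists_lt [IsProbabilityMeasure p] (hmeas : ∀ i, Measurable (X i))
    (hindep : iIndepFun X μ) (hdist : ∀ i, μ.map (X i) = p)
    (hsupp : {j : ℕ | p {j} ≠ 0}.Infinite) :
    ∀ᵐ ω ∂μ, ∀ K, ∃ i, K < X i ω := by
  rw [ae_all_iff]
  intro K
  have hK : p (Set.Iic K) < 1 := by
    obtain ⟨j, hj, hKj⟩ := hsupp.exists_gt K
    rw [← tsub_pos_iff_lt, ← prob_compl_eq_one_sub measurableSet_Iic]
    exact (pos_iff_ne_zero.2 hj).trans_le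
      (measure_mono (Set.singleton_subset_iff.2 (by simpa using hKj)))
  rw [ae_iff]
  simpa using measure_forall_mem_eq_zero hmeas hindep hdist measurableSet_Iic hK

theorem measure_tie_le (hmeas : ∀ i, Measurable (X i)) (hindep : iIndepFun X μ)
    (hdist : ∀ i, μ.map (X i) = p) {j m n : ℕ} (hmn : m < n) :
    μ {ω | X m ω = j ∧ X n ω = j ∧ ∀ i < n, i ≠ m → X i ω < j}
      ≤ p {j} ^ 2 * p (Set.Iio j) ^ (n - 1) := by
  classical
  set A : ℕ → Set ℕ := fun i => if i = m ∨ i = n then {j} else Set.Iio j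
  have hsub : {ω | X m ω = j ∧ X n ω = j ∧ ∀ i < n, i ≠ m → X i ω < j}
      ⊆ ⋂ i ∈ Finset.range (n + 1), X i ⁻¹' A i := by
    rintro ω ⟨hm, hn, hlt⟩
    refine Set.mem_biInter fun i hi => ?_
    rcases eq_or_ne i m with rfl | him
    · simp [A, hm]
    rcases eq_or_ne i n with rfl | hin
    · simp [A, hn]
    have := hlt i (by simp at hi; omega) him
    simp [A, him, hin, this]
  refine (measure_mono hsub).trans_eq ?_
  rw [hindep.measure_biInter_preimage_eq_prod hmeas hdist _ fun _ => MeasurableSet.of_discrete]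
  have hm : m ∈ Finset.range (n + 1) := Finset.mem_range.2 (by omega)
  have hn : n ∈ (Finset.range (n + 1)).erase m := by simp [hmn.ne']
  have hrest : ∀ i ∈ ((Finset.range (n + 1)).erase m).erase n, p (A i) = p (Set.Iio j) :=
    fun i hi => by simp only [Finset.mem_erase] at hi; simp [A, hi.1, hi.2.1]
  rw [← Finset.mul_prod_erase _ _ hm, ← Finset.mul_prod_erase _ _ hn,
    Finset.prod_congr rfl hrest, Finset.prod_const,
    Finset.card_erase_of_mem hn, Finset.card_erase_of_mem hm, Finset.card_range]
  simp [A, sq, mul_assoc]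

theorem measure_setOf_isTiedRecord_le [IsProbabilityMeasure p] (hmeas : ∀ i, Measurable (X i))
    (hindep : iIndepFun X μ) (hdist : ∀ i, μ.map (X i) = p) (j : ℕ) :
    μ {ω | IsTiedRecord (X · ω) j} ≤ (p {j} / p (Set.Ici j)) ^ 2 := by
  set t := p (Set.Iio j)
  calc μ {ω | IsTiedRecord (X · ω) j}
      ≤ μ (⋃ q : ℕ × ℕ, {ω | X q.1 ω = j ∧ X (q.1 + q.2 + 1) ω = j ∧
          ∀ i < q.1 + q.2 + 1, i ≠ q.1 → X i ω < j}) := by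
        refine measure_mono fun ω ⟨m, n, hmn, hω⟩ => Set.mem_iUnion.2 ⟨(m, n - m - 1), ?_⟩
        rwa [show m + (n - m - 1) + 1 = n by omega]
    _ ≤ ∑' q : ℕ × ℕ, p {j} ^ 2 * t ^ (q.1 + q.2) :=
        (measure_iUnion_le _).trans <| ENNReal.tsum_le_tsum fun q =>
          measure_tie_le hmeas hindep hdist (by omega)
    _ = p {j} ^ 2 * (∑' k, t ^ k) ^ 2 := by
        simp_rw [ENNReal.tsum_mul_left, ENNReal.tsum_prod (f := fun a b => t ^ (a + b)), pow_add,
          ENNReal.tsum_mul_left, ENNReal.tsum_mul_right, sq]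
    _ = (p {j} / p (Set.Ici j)) ^ 2 := by
        rw [ENNReal.tsum_geometric, ← prob_compl_eq_one_sub measurableSet_Iio, Set.compl_Iio,
          div_eq_mul_inv, mul_pow]

theorem ae_eventually_not_isTiedRecord [IsProbabilityMeasure p] (hmeas : ∀ i, Measurable (X i))
    (hindep : iIndepFun X μ) (hdist : ∀ i, μ.map (X i) = p)
    (hsum : ∑' j : ℕ, (p {j} / p (Set.Ici j)) ^ 2 ≠ ⊤) :
    ∀ᵐ ω ∂μ, ∀ᶠ j in atTop, ¬ IsTiedRecord (X · ω) j :=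
  ae_eventually_notMem (s := fun j => {ω | IsTiedRecord (X · ω) j}) <|
    ne_top_of_le_ne_top hsum <| ENNReal.tsum_le_tsum <|
      measure_setOf_isTiedRecord_le hmeas hindep hdist

end NatValued

theorem eventual_record_simplicity_general
    {Ω : Type*} [MeasurableSpace Ω] (μ : Measure Ω)
    (p : Measure ℕ) [IsProbabilityMeasure p]
    (X : ℕ → Ω → ℕ) (hmeas : ∀ i, Measurable (X i))
    (hindep : iIndepFun X μ)
    (hdist : ∀ i, μ.map (X i) = p)
    (hsupp : {j : ℕ | p {j} ≠ 0}.Infinite)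
    (hsum : ∑' j : ℕ, (p {j} / p (Set.Ici j)) ^ 2 ≠ ⊤) :
    ∀ᵐ ω ∂μ, ∃ N, ∀ n ≥ N, ∃! i, i ∈ Finset.range n ∧
      X i ω = (Finset.range n).sup fun j => X j ω := by
  filter_upwards [ae_eventually_not_isTiedRecord hmeas hindep hdist hsum,
    ae_forall_exists_lt hmeas hindep hdist hsupp] with ω htie hunbounded
  obtain ⟨J, hJ⟩ := eventually_atTop.1 htie
  exact exists_forall_ge_existsUnique_eq_sup hJ (hunbounded J)

/-- **Eventual record simplicity** (Brands–Steutel–Wilms): if `Σⱼ ρⱼ² < ∞` where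
`ρⱼ = pⱼ / (pⱼ + p_{j+1} + ⋯)`, then almost surely the running maximum of an i.i.d.
`p`-distributed sequence is eventually attained at exactly one index. -/
theorem eventual_record_simplicity
    {Ω : Type*} [MeasurableSpace Ω] (μ : Measure Ω) [IsProbabilityMeasure μ]
    (p : Measure ℕ) [IsProbabilityMeasure p]
    (X : ℕ → Ω → ℕ) (hmeas : ∀ i, Measurable (X i))
    (hindep : iIndepFun X μ)
    (hdist : ∀ i, μ.map (X i) = p)
    (hsupp : {j : ℕ | p {j} ≠ 0}.Infinite)
    (hsum : ∑' j : ℕ, (p {j} / p (Set.Ici j)) ^ 2 ≠ ⊤) :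
    ∀ᵐ ω ∂μ, ∃ N, ∀ n ≥ N, ∃! i, i ∈ Finset.range n ∧
      X i ω = (Finset.range n).sup fun j => X j ω :=
  eventual_record_simplicity_general μ p X hmeas hindep hdist hsupp hsum
end

section
/- Let (Xₙ) be i.i.d. ℤ₊-valued random variables with c.d.f. F, and let φ: ℕ → ℕ be non-decreasing with Σₙ F_{φ(n)}ⁿ < ∞. Then almost surely Mₙ = max{X₁, ..., Xₙ} ≥ φ(n) for all sufficiently large n. -/
open MeasureTheory ProbabilityTheory Filter

/- By independence the event `{max_{i<n} Xᵢ < φ(n)}` has probability `P(X₁ < φ(n))ⁿ ≤ F_{φ(n)}ⁿ`,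
a summable sequence, so by Borel–Cantelli almost surely only finitely many of these events occur. -/

theorem ProbabilityTheory.iIndepFun.measure_biInter_preimage_eq_pow
    {Ω ι β : Type*} [MeasurableSpace Ω] [MeasurableSpace β] {μ : Measure Ω} {p : Measure β}
    {X : ι → Ω → β} (hmeas : ∀ i, Measurable (X i)) (hindep : iIndepFun X μ)
    (hdist : ∀ i, μ.map (X i) = p) {t : Set β} (ht : MeasurableSet t) (s : Finset ι) :
    μ (⋂ i ∈ s, X i ⁻¹' t) = p t ^ s.card := by
  rw [hindep.meas_biInter fun i _ => ⟨t, ht, rfl⟩, ← Finset.prod_const]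
  refine Finset.prod_congr rfl fun i _ => ?_
  rw [← hdist i, Measure.map_apply (hmeas i) ht]

theorem record_values_lower_bound_general
    {Ω : Type*} [MeasurableSpace Ω] (μ : Measure Ω)
    (p : Measure ℕ)
    (X : ℕ → Ω → ℕ) (hmeas : ∀ i, Measurable (X i))
    (hindep : iIndepFun X μ)
    (hdist : ∀ i, μ.map (X i) = p)
    (φ : ℕ → ℕ)
    (hsum : ∑' n : ℕ, p (Set.Iic (φ n)) ^ n ≠ ⊤) :
    ∀ᵐ ω ∂μ, ∃ N, ∀ n ≥ N, φ n ≤ (Finset.range n).sup fun i => X i ω := by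
  have hrare : ∑' n, μ (⋂ i ∈ Finset.range n, X i ⁻¹' Set.Iio (φ n)) ≠ ⊤ := by
    refine ne_top_of_le_ne_top hsum (ENNReal.tsum_le_tsum fun n => ?_)
    rw [hindep.measure_biInter_preimage_eq_pow hmeas hdist measurableSet_Iio, Finset.card_range]
    gcongr
    exact Set.Iio_subset_Iic_self
  filter_upwards [ae_eventually_notMem hrare] with ω hω
  obtain ⟨N, hN⟩ := eventually_atTop.mp hω
  refine ⟨N, fun n hn => ?_⟩
  obtain ⟨i, hi, hle⟩ : ∃ i ∈ Finset.range n, φ n ≤ X i ω := by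
    simpa only [Set.mem_iInter, Set.mem_preimage, Set.mem_Iio, not_forall, not_lt,
      exists_prop] using hN n hn
  exact Finset.le_sup_of_le hi hle

/-- Lower bound on record values: if `φ` is non-decreasing and `Σₙ F_{φ(n)}ⁿ < ∞`,
then almost surely `Mₙ ≥ φ(n)` for all sufficiently large `n`, where `Mₙ` is the
running maximum of an i.i.d. `p`-distributed sequence. -/
theorem record_values_lower_bound
    {Ω : Type*} [MeasurableSpace Ω] (μ : Measure Ω) [IsProbabilityMeasure μ]
    (p : Measure ℕ) [IsProbabilityMeasure p]
    (X : ℕ → Ω → ℕ) (hmeas : ∀ i, Measurable (X i))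
    (hindep : iIndepFun X μ)
    (hdist : ∀ i, μ.map (X i) = p)
    (φ : ℕ → ℕ) (hφ : Monotone φ)
    (hsum : ∑' n : ℕ, p (Set.Iic (φ n)) ^ n ≠ ⊤) :
    ∀ᵐ ω ∂μ, ∃ N, ∀ n ≥ N, φ n ≤ (Finset.range n).sup fun i => X i ω :=
  record_values_lower_bound_general μ p X hmeas hindep hdist φ hsum
end
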